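/- arXiv:2504.20718 — 2 statements merged into one kernel-verified Lean document; each statement's English description precedes it below -/
import Mathlib

section
/- There exists $M \geq 1$ such that for every unimodular lattice $\Lambda \subset \mathbb{R}^{m+n}$, the set of vectors $v \in \Lambda$ satisfying (i) $1 \leq \|\pi_2(v)\| < e$, (ii) $\|\pi_1(v)\| \leq 1$, and (iii) the only primitive lattice vectors in the box $C_v = \{(x,y) : \|x\| \leq \|\pi_1(v)\|, \|y\| \leq \|\pi_2(v)\|\}$ are $\pm v$, has cardinality at most $M$. In particular, the function $f(\Lambda)$ counting such vectors is uniformly bounded on the space of unimodular lattices. -/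
noncomputable section

/-- The ambient space `ℝ^m × ℝ^n`. -/
abbrev Vec (m n : ℕ) := (Fin m → ℝ) × (Fin n → ℝ)

/-- `v` is a primitive vector of the lattice `Λ`: it is a nonzero lattice vector which is
not a proper integer multiple of another lattice vector. -/
def IsPrim {m n : ℕ} (Λ : Set (Vec m n)) (v : Vec m n) : Prop :=
  v ∈ Λ ∧ v ≠ 0 ∧ ¬∃ w ∈ Λ, ∃ k : ℤ, 2 ≤ |k| ∧ v = k • w

/-- The box `C_v` determined by norms `Nm`, `Nn` on the factors. -/
def box {m n : ℕ} (Nm : (Fin m → ℝ) → ℝ) (Nn : (Fin n → ℝ) → ℝ) (v : Vec m n) :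
    Set (Vec m n) :=
  {w | Nm w.1 ≤ Nm v.1 ∧ Nn w.2 ≤ Nn v.2}

/-- The set counted by the function `f`: lattice vectors `v ∈ Λ` with
`1 ≤ ‖π₂ v‖ < e`, `‖π₁ v‖ ≤ 1`, whose box contains no primitive lattice vectors
besides `±v`. -/
def goodSet {m n : ℕ} (Nm : (Fin m → ℝ) → ℝ) (Nn : (Fin n → ℝ) → ℝ)
    (Λ : Set (Vec m n)) : Set (Vec m n) :=
  {v | v ∈ Λ ∧ 1 ≤ Nn v.2 ∧ Nn v.2 < Real.exp 1 ∧ Nm v.1 ≤ 1 ∧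
    {w | IsPrim Λ w} ∩ box Nm Nn v = {v, -v}}

/-- The counting function `f(Λ)`. -/
def fCount {m n : ℕ} (Nm : (Fin m → ℝ) → ℝ) (Nn : (Fin n → ℝ) → ℝ)
    (Λ : Set (Vec m n)) : ℕ :=
  (goodSet Nm Nn Λ).ncard

/-- The lattice `a_t u(θ) ℤ^{m+n}`, written out explicitly: the set of vectors
`(e^{(n/m)t}(p + θq), e^{-t} q)` with `p ∈ ℤ^m`, `q ∈ ℤ^n`. -/
def latticeSet (m n : ℕ) (θ : Matrix (Fin m) (Fin n) ℝ) (t : ℝ) : Set (Vec m n) :=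
  {v | ∃ (p : Fin m → ℤ) (q : Fin n → ℤ),
    v = (Real.exp ((n / m : ℝ) * t) •
          fun i => (p i : ℝ) + θ.mulVec (fun j => (q j : ℝ)) i,
        Real.exp (-t) • fun j => (q j : ℝ))}

/-- `(p, q)` is a best approximation of `θ` w.r.t. the norms `Nm`, `Nn`. -/
def IsBest {m n : ℕ} (Nm : (Fin m → ℝ) → ℝ) (Nn : (Fin n → ℝ) → ℝ)
    (θ : Matrix (Fin m) (Fin n) ℝ) (p : Fin m → ℤ) (q : Fin n → ℤ) : Prop :=
  q ≠ 0 ∧ ∀ (p' : Fin m → ℤ) (q' : Fin n → ℤ), q' ≠ 0 →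
    Nm (fun i => (p' i : ℝ) + θ.mulVec (fun j => (q' j : ℝ)) i) ≤
      Nm (fun i => (p i : ℝ) + θ.mulVec (fun j => (q j : ℝ)) i) →
    Nn (fun j => (q' j : ℝ)) ≤ Nn (fun j => (q j : ℝ)) →
    ((p', q') = (p, q) ∨ (p', q') = (-p, -q))

/-- The number of best approximations `(p,q)` of `θ` with `‖q‖ ≤ eᵀ`. -/
def NCount {m n : ℕ} (Nm : (Fin m → ℝ) → ℝ) (Nn : (Fin n → ℝ) → ℝ)
    (θ : Matrix (Fin m) (Fin n) ℝ) (T : ℝ) : ℕ :=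
  {pq : (Fin m → ℤ) × (Fin n → ℤ) | IsBest Nm Nn θ pq.1 pq.2 ∧
    Nn (fun j => (pq.2 j : ℝ)) ≤ Real.exp T}.ncard

/-- Standard norm axioms for a function `N`. -/
def IsNorm {d : ℕ} (N : (Fin d → ℝ) → ℝ) : Prop :=
  (∀ x, 0 ≤ N x) ∧ (∀ x, N x = 0 ↔ x = 0) ∧
    (∀ (c : ℝ) x, N (c • x) = |c| * N x) ∧ (∀ x y, N (x + y) ≤ N x + N y)

end

/-- The integer points `ℤ^m × ℤ^n` inside `ℝ^m × ℝ^n`. -/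
def ZPoints (m n : ℕ) : Set (Vec m n) :=
  {v | (∀ i, ∃ k : ℤ, v.1 i = (k : ℝ)) ∧ ∀ j, ∃ k : ℤ, v.2 j = (k : ℝ)}

-- AUX START
namespace Stmt1Aux

def imap (m n : ℕ) (a : (Fin m → ℤ) × (Fin n → ℤ)) : Vec m n :=
  (fun i => (a.1 i : ℝ), fun j => (a.2 j : ℝ))

lemma imap_mem (m n : ℕ) (a : (Fin m → ℤ) × (Fin n → ℤ)) : imap m n a ∈ ZPoints m n :=
  ⟨fun i => ⟨a.1 i, rfl⟩, fun j => ⟨a.2 j, rfl⟩⟩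

lemma mem_ZPoints_iff {m n : ℕ} {v : Vec m n} : v ∈ ZPoints m n ↔ ∃ a, v = imap m n a := by
  constructor
  · rintro ⟨h1, h2⟩
    choose f hf using h1
    choose g hg using h2
    exact ⟨(f, g), Prod.ext (funext hf) (funext hg)⟩
  · rintro ⟨a, rfl⟩; exact imap_mem m n a

lemma imap_sub {m n : ℕ} (a b : (Fin m → ℤ) × (Fin n → ℤ)) :
    imap m n (a - b) = imap m n a - imap m n b := by
  refine Prod.ext ?_ ?_ <;> funext i <;> simp [imap]

lemma imap_eq_zero {m n : ℕ} {a : (Fin m → ℤ) × (Fin n → ℤ)} :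
    imap m n a = 0 ↔ a = 0 := by
  constructor
  · intro h
    have h1 := congrArg Prod.fst h
    have h2 := congrArg Prod.snd h
    refine Prod.ext ?_ ?_ <;> funext i
    · have := congrFun h1 i; simpa [imap] using this
    · have := congrFun h2 i; simpa [imap] using this
  · rintro rfl; refine Prod.ext ?_ ?_ <;> funext i <;> simp [imap]

lemma imap_zsmul {m n : ℕ} (k : ℤ) (a : (Fin m → ℤ) × (Fin n → ℤ)) :
    imap m n (k • a) = k • imap m n a := by
  refine Prod.ext ?_ ?_ <;> funext i <;> simp [imap]

/-- Norm comparison with sup norm. -/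
lemma exists_norm_bounds {d : ℕ} (hd : 0 < d) {N : (Fin d → ℝ) → ℝ} (hN : IsNorm N) :
    ∃ C : ℝ, 0 < C ∧ (∀ x, N x ≤ C * ‖x‖) ∧ ∀ x, ‖x‖ ≤ C * N x := by
  obtain ⟨hpos, hzero, hsmul, hadd⟩ := hN
  have h0 : N 0 = 0 := (hzero 0).mpr rfl
  have hneg : ∀ x, N (-x) = N x := fun x => by
    have := hsmul (-1) x; simpa using this
  set C₁ : ℝ := ∑ i, N (Pi.single i 1) with hC₁
  have hC₁0 : 0 ≤ C₁ := Finset.sum_nonneg fun i _ => hpos _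
  have hsum : ∀ (s : Finset (Fin d)) (f : Fin d → (Fin d → ℝ)),
      N (∑ i ∈ s, f i) ≤ ∑ i ∈ s, N (f i) := by
    intro s f
    induction s using Finset.cons_induction with
    | empty => simp [h0]
    | cons i s hi ih =>
        rw [Finset.sum_cons, Finset.sum_cons]
        exact le_trans (hadd _ _) (by linarith)
  have hupper : ∀ x, N x ≤ C₁ * ‖x‖ := by
    intro x
    have hx : x = ∑ i, x i • (Pi.single i 1 : Fin d → ℝ) := by
      funext j
      rw [Finset.sum_apply]
      simp [Pi.single_apply]
    calc N x = N (∑ i, x i • (Pi.single i 1 : Fin d → ℝ)) := by rw [← hx]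
    _ ≤ ∑ i, N (x i • (Pi.single i 1 : Fin d → ℝ)) := hsum _ _
    _ = ∑ i, |x i| * N ((Pi.single i 1 : Fin d → ℝ)) := by simp [hsmul]
    _ ≤ ∑ i, ‖x‖ * N ((Pi.single i 1 : Fin d → ℝ)) := by
        refine Finset.sum_le_sum fun i _ => mul_le_mul_of_nonneg_right ?_ (hpos _)
        simpa using norm_le_pi_norm x i
    _ = C₁ * ‖x‖ := by rw [← Finset.mul_sum, mul_comm]
  have hdiff : ∀ x y, |N x - N y| ≤ N (x - y) := by
    intro x y
    rw [abs_sub_le_iff]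
    constructor
    · have := hadd (x - y) y; simp only [sub_add_cancel] at this; linarith
    · have h1 := hadd (y - x) x
      simp only [sub_add_cancel] at h1
      have h2 : N (y - x) = N (x - y) := by rw [← hneg (y - x), neg_sub]
      linarith
  have hcont : Continuous N := by
    have : LipschitzWith (Real.toNNReal C₁) N := by
      refine LipschitzWith.of_dist_le_mul fun x y => ?_
      rw [Real.dist_eq, dist_eq_norm]
      calc |N x - N y| ≤ N (x - y) := hdiff x y
      _ ≤ C₁ * ‖x - y‖ := hupper _
      _ ≤ (Real.toNNReal C₁ : ℝ) * ‖x - y‖ := by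
          refine mul_le_mul_of_nonneg_right ?_ (norm_nonneg _)
          rw [Real.coe_toNNReal']; exact le_max_left _ _
    exact this.continuous
  haveI : Nonempty (Fin d) := ⟨⟨0, hd⟩⟩
  have hsph : (Metric.sphere (0 : Fin d → ℝ) 1).Nonempty := by
    refine ⟨fun _ => 1, ?_⟩
    simp [mem_sphere_iff_norm]
  obtain ⟨x₀, hx₀s, hx₀min⟩ := (isCompact_sphere (0 : Fin d → ℝ) 1).exists_isMinOn hsph
    hcont.continuousOn
  have hx₀n : ‖x₀‖ = 1 := by simpa [mem_sphere_iff_norm] using hx₀s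
  have hx₀0 : x₀ ≠ 0 := by intro h; rw [h] at hx₀n; simp at hx₀n
  have hc : 0 < N x₀ := by
    rcases (hpos x₀).lt_or_eq with h | h
    · exact h
    · exact absurd ((hzero x₀).mp h.symm) hx₀0
  have hlower : ∀ x, ‖x‖ ≤ (N x₀)⁻¹ * N x := by
    intro x
    by_cases hx : x = 0
    · simp [hx, h0]
    · have hxn : ‖x‖ ≠ 0 := norm_ne_zero_iff.mpr hx
      set y := ‖x‖⁻¹ • x with hy
      have hys : y ∈ Metric.sphere (0 : Fin d → ℝ) 1 := by
        simp only [mem_sphere_iff_norm, sub_zero, hy, norm_smul, norm_inv, norm_norm]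
        field_simp
      have h1 : N x₀ ≤ N y := hx₀min hys
      have h2 : N x = ‖x‖ * N y := by
        conv_lhs => rw [← smul_inv_smul₀ hxn x]
        rw [hsmul, abs_of_nonneg (norm_nonneg x)]
      rw [le_inv_mul_iff₀ hc, h2, mul_comm ‖x‖ (N y)]
      exact mul_le_mul_of_nonneg_right h1 (norm_nonneg x)
  refine ⟨max C₁ (N x₀)⁻¹ + 1, ?_, fun x => ?_, fun x => ?_⟩
  · have : 0 ≤ max C₁ (N x₀)⁻¹ := le_trans hC₁0 (le_max_left _ _)
    linarith
  · refine le_trans (hupper x) (mul_le_mul_of_nonneg_right ?_ (norm_nonneg x))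
    have := le_max_left C₁ (N x₀)⁻¹; linarith
  · refine le_trans (hlower x) (mul_le_mul_of_nonneg_right ?_ (hpos x))
    have := le_max_right C₁ (N x₀)⁻¹; linarith

def mu {m n : ℕ} (a : (Fin m → ℤ) × (Fin n → ℤ)) : ℕ :=
  ∑ i, (a.1 i).natAbs + ∑ j, (a.2 j).natAbs

lemma mu_pos {m n : ℕ} {a : (Fin m → ℤ) × (Fin n → ℤ)} (ha : a ≠ 0) : 0 < mu a := by
  by_contra h
  push_neg at h
  interval_cases hmu : mu a
  · apply ha
    have h1 : ∑ i, (a.1 i).natAbs = 0 ∧ ∑ j, (a.2 j).natAbs = 0 := by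
      unfold mu at hmu; omega
    refine Prod.ext ?_ ?_ <;> funext i
    · have := Finset.sum_eq_zero_iff.mp h1.1 i (Finset.mem_univ i)
      simpa [Int.natAbs_eq_zero] using this
    · have := Finset.sum_eq_zero_iff.mp h1.2 i (Finset.mem_univ i)
      simpa [Int.natAbs_eq_zero] using this

lemma mu_zsmul {m n : ℕ} (k : ℤ) (a : (Fin m → ℤ) × (Fin n → ℤ)) :
    mu (k • a) = k.natAbs * mu a := by
  unfold mu
  rw [Nat.mul_add, Finset.mul_sum, Finset.mul_sum]
  congr 1 <;> refine Finset.sum_congr rfl fun i _ => ?_ <;>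
    simp [Prod.smul_fst, Prod.smul_snd, Int.natAbs_mul, smul_eq_mul]

/-- Descent: every nonzero lattice vector dominates a primitive one in both norms. -/
lemma exists_prim {m n : ℕ} (Nm : (Fin m → ℝ) → ℝ) (Nn : (Fin n → ℝ) → ℝ)
    (hNm : IsNorm Nm) (hNn : IsNorm Nn) (e : Vec m n ≃ₗ[ℝ] Vec m n) :
    ∀ (K : ℕ) (a : (Fin m → ℤ) × (Fin n → ℤ)), mu a ≤ K → a ≠ 0 →
    ∃ u', IsPrim (⇑e '' ZPoints m n) u' ∧
      Nm u'.1 ≤ Nm (e (imap m n a)).1 ∧ Nn u'.2 ≤ Nn (e (imap m n a)).2 := by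
  intro K
  induction K with
  | zero => intro a hK ha; exact absurd hK (by simpa using (mu_pos ha).ne')
  | succ K ih =>
    intro a hK ha
    have hane : imap m n a ≠ 0 := fun h => ha (imap_eq_zero.mp h)
    have huane : e (imap m n a) ≠ 0 := by
      intro h
      exact hane (by simpa using (map_eq_zero_iff e e.injective).mp h)
    by_cases hp : ∃ w ∈ (⇑e '' ZPoints m n), ∃ k : ℤ, 2 ≤ |k| ∧ e (imap m n a) = k • w
    · obtain ⟨w, hw, k, hk2, hk⟩ := hp
      obtain ⟨z, hz, rfl⟩ := hw
      obtain ⟨b, rfl⟩ := mem_ZPoints_iff.mp hz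
      have heq : imap m n a = imap m n (k • b) := by
        apply e.injective
        rw [hk, imap_zsmul, map_zsmul]
      have hab : a = k • b := by
        have h1 := congrArg Prod.fst heq
        have h2 := congrArg Prod.snd heq
        refine Prod.ext ?_ ?_ <;> funext i
        · have := congrFun h1 i
          simp only [imap] at this
          exact_mod_cast this
        · have := congrFun h2 i
          simp only [imap] at this
          exact_mod_cast this
      have hb0 : b ≠ 0 := by rintro rfl; exact ha (by simpa using hab)
      have hknat : 2 ≤ k.natAbs := by
        have : ((2:ℕ) : ℤ) ≤ (k.natAbs : ℤ) := by rwa [← Int.abs_eq_natAbs]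
        exact_mod_cast this
      have hmub : mu b ≤ K := by
        have h1 : mu a = k.natAbs * mu b := by rw [hab, mu_zsmul]
        have h2 : 0 < mu b := mu_pos hb0
        nlinarith [hK]
      obtain ⟨u', hprim, hb1, hb2⟩ := ih b hmub hb0
      refine ⟨u', hprim, le_trans hb1 ?_, le_trans hb2 ?_⟩
      all_goals {
        rw [hab, imap_zsmul, map_zsmul]
        first
        | (rw [Prod.smul_fst, ← Int.cast_smul_eq_zsmul ℝ, hNm.2.2.1]
           have h1 : (1:ℝ) ≤ |(k:ℝ)| := by
             rw [← Int.cast_abs]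
             exact_mod_cast le_trans (by norm_num) hk2
           nlinarith [hNm.1 (e (imap m n b)).1])
        | (rw [Prod.smul_snd, ← Int.cast_smul_eq_zsmul ℝ, hNn.2.2.1]
           have h1 : (1:ℝ) ≤ |(k:ℝ)| := by
             rw [← Int.cast_abs]
             exact_mod_cast le_trans (by norm_num) hk2
           nlinarith [hNn.1 (e (imap m n b)).2]) }
    · exact ⟨e (imap m n a), ⟨⟨imap m n a, imap_mem m n a, rfl⟩, huane, hp⟩, le_refl _, le_refl _⟩

end Stmt1Aux

/-- Boundedness of `f`: there is `M ≥ 1` such that for every unimodular lattice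
`Λ = e(ℤ^{m+n})` (with `|det e| = 1`), the set of vectors `v ∈ Λ` with
`1 ≤ ‖π₂ v‖ < e`, `‖π₁ v‖ ≤ 1` whose box contains no primitive lattice vector besides
`±v` is finite of cardinality at most `M`. -/
theorem stmt_1 (m n : ℕ) (hm : 0 < m) (hn : 0 < n)
    (Nm : (Fin m → ℝ) → ℝ) (Nn : (Fin n → ℝ) → ℝ)
    (hNm : IsNorm Nm) (hNn : IsNorm Nn) :
    ∃ M : ℕ, 1 ≤ M ∧
      ∀ e : Vec m n ≃ₗ[ℝ] Vec m n,
        |LinearMap.det (e : Vec m n →ₗ[ℝ] Vec m n)| = 1 →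
        (goodSet Nm Nn (⇑e '' ZPoints m n)).Finite ∧
          (goodSet Nm Nn (⇑e '' ZPoints m n)).ncard ≤ M := by
  classical
  obtain ⟨C, hC0, hCu, hCl⟩ := Stmt1Aux.exists_norm_bounds hm hNm
  obtain ⟨D, hD0, hDu, hDl⟩ := Stmt1Aux.exists_norm_bounds hn hNn
  set B₁ : ℤ := ⌈2*C^2⌉ with hB₁
  set B₂ : ℤ := ⌈6*D^2⌉ with hB₂
  have hB₁0 : 0 ≤ B₁ := Int.ceil_nonneg (by positivity)
  have hB₂0 : 0 ≤ B₂ := Int.ceil_nonneg (by positivity)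
  set T : Finset ((Fin m → ℤ) × (Fin n → ℤ)) :=
    (Fintype.piFinset fun _ : Fin m => Finset.Icc (-B₁) B₁) ×ˢ
      (Fintype.piFinset fun _ : Fin n => Finset.Icc (-B₂) B₂) with hT
  have hTne : ((0, 0) : (Fin m → ℤ) × (Fin n → ℤ)) ∈ T := by
    simp only [hT, Finset.mem_product, Fintype.mem_piFinset, Finset.mem_Icc]
    constructor <;> intro i <;> constructor <;> simp <;> omega
  refine ⟨T.card, Finset.card_pos.mpr ⟨_, hTne⟩, fun e _ => ?_⟩
  have key : ∀ F : Finset (Vec m n),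
      ↑F ⊆ goodSet Nm Nn (⇑e '' ZPoints m n) → F.card ≤ T.card := by
    intro F hF
    by_contra hcard
    push_neg at hcard
    have hFne : F.Nonempty := Finset.card_pos.mp (lt_of_le_of_lt (Nat.zero_le _) hcard)
    obtain ⟨v₁, hv₁F, hv₁max⟩ := F.exists_max_image (fun v => Nm v.1) hFne
    set r := Nm v₁.1 with hr
    have hr0 : 0 ≤ r := hNm.1 _
    have hexp3 : Real.exp 1 ≤ 3 := le_of_lt (lt_trans Real.exp_one_lt_d9 (by norm_num))
    set c : Vec m n → (Fin m → ℤ) × (Fin n → ℤ) :=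
      fun v => (fun i => if r = 0 then 0 else ⌊v.1 i * (2*C) / r⌋,
                fun j => ⌊v.2 j * (2*D)⌋) with hc
    have hmaps : ∀ v ∈ F, c v ∈ T := by
      intro v hv
      obtain ⟨hvΛ, hv1, hv2, hv3, hveq⟩ := hF hv
      simp only [hT, hc, Finset.mem_product, Fintype.mem_piFinset, Finset.mem_Icc]
      constructor
      · intro i
        by_cases hrz : r = 0
        · simp only [if_pos hrz]; omega
        · have hrpos : 0 < r := lt_of_le_of_ne hr0 (Ne.symm hrz)
          simp only [if_neg hrz]
          have habs : |v.1 i| ≤ C * r := by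
            calc |v.1 i| ≤ ‖v.1‖ := by simpa using norm_le_pi_norm v.1 i
            _ ≤ C * Nm v.1 := hCl _
            _ ≤ C * r := by nlinarith [hv₁max v hv]
          have hx : |v.1 i * (2*C) / r| ≤ 2*C^2 := by
            rw [abs_div, abs_mul, abs_of_pos hrpos, abs_of_pos (by linarith : (0:ℝ) < 2*C),
              div_le_iff₀ hrpos]
            nlinarith [abs_nonneg (v.1 i)]
          rw [abs_le] at hx
          have hceil : (2*C^2 : ℝ) ≤ (B₁ : ℝ) := Int.le_ceil _
          constructor
          · rw [Int.le_floor]; push_cast; linarith [hx.1]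
          · have h1 : (⌊v.1 i * (2*C) / r⌋ : ℝ) ≤ (B₁ : ℝ) :=
              le_trans (Int.floor_le _) (le_trans hx.2 hceil)
            exact_mod_cast h1
      · intro j
        have habs : |v.2 j| ≤ 3*D := by
          calc |v.2 j| ≤ ‖v.2‖ := by simpa using norm_le_pi_norm v.2 j
          _ ≤ D * Nn v.2 := hDl _
          _ ≤ 3*D := by nlinarith
        have hx : |v.2 j * (2*D)| ≤ 6*D^2 := by
          rw [abs_mul, abs_of_pos (by linarith : (0:ℝ) < 2*D)]
          nlinarith [abs_nonneg (v.2 j)]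
        rw [abs_le] at hx
        have hceil : (6*D^2 : ℝ) ≤ (B₂ : ℝ) := Int.le_ceil _
        constructor
        · rw [Int.le_floor]; push_cast; linarith [hx.1]
        · have h1 : (⌊v.2 j * (2*D)⌋ : ℝ) ≤ (B₂ : ℝ) :=
            le_trans (Int.floor_le _) (le_trans hx.2 hceil)
          exact_mod_cast h1
    obtain ⟨v, hvF, w, hwF, hvw, hcvw⟩ :=
      Finset.exists_ne_map_eq_of_card_lt_of_maps_to hcard hmaps
    have hc1 := congrArg Prod.fst hcvw
    have hc2 := congrArg Prod.snd hcvw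
    have hu1 : Nm (v.1 - w.1) ≤ r := by
      by_cases hrz : r = 0
      · have hv0 : v.1 = 0 := (hNm.2.1 _).mp
          (le_antisymm (hrz ▸ hv₁max v hvF) (hNm.1 _))
        have hw0 : w.1 = 0 := (hNm.2.1 _).mp
          (le_antisymm (hrz ▸ hv₁max w hwF) (hNm.1 _))
        rw [hv0, hw0, sub_self, (hNm.2.1 0).mpr rfl]
        exact hr0
      · have hrpos : 0 < r := lt_of_le_of_ne hr0 (Ne.symm hrz)
        have hcoord : ∀ i, |v.1 i - w.1 i| ≤ r / (2*C) := by
          intro i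
          have hfe : ⌊v.1 i * (2*C)/r⌋ = ⌊w.1 i * (2*C)/r⌋ := by
            have h := congrFun hc1 i
            simp only [hc, if_neg hrz] at h
            exact h
          have h1 : |v.1 i * (2*C)/r - w.1 i * (2*C)/r| < 1 :=
            Int.abs_sub_lt_one_of_floor_eq_floor hfe
          have h2 : v.1 i * (2*C)/r - w.1 i * (2*C)/r = ((v.1 i - w.1 i) * (2*C)) / r := by
            ring
          rw [h2, abs_div, abs_mul, abs_of_pos hrpos,
            abs_of_pos (by linarith : (0:ℝ) < 2*C), div_lt_one hrpos] at h1
          rw [le_div_iff₀ (by linarith : (0:ℝ) < 2*C)]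
          linarith
        have hsup : ‖v.1 - w.1‖ ≤ r / (2*C) := by
          rw [pi_norm_le_iff_of_nonneg (by positivity)]
          intro i
          simpa [Real.norm_eq_abs] using hcoord i
        calc Nm (v.1 - w.1) ≤ C * ‖v.1 - w.1‖ := hCu _
        _ ≤ C * (r/(2*C)) := mul_le_mul_of_nonneg_left hsup (le_of_lt hC0)
        _ = r/2 := by field_simp
        _ ≤ r := by linarith
    have hu2 : Nn (v.2 - w.2) < 1 := by
      have hcoord : ∀ j, |v.2 j - w.2 j| ≤ 1 / (2*D) := by
        intro j
        have hfe : ⌊v.2 j * (2*D)⌋ = ⌊w.2 j * (2*D)⌋ := congrFun hc2 j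
        have h1 : |v.2 j * (2*D) - w.2 j * (2*D)| < 1 :=
          Int.abs_sub_lt_one_of_floor_eq_floor hfe
        have h2 : v.2 j * (2*D) - w.2 j * (2*D) = (v.2 j - w.2 j) * (2*D) := by ring
        rw [h2, abs_mul, abs_of_pos (by linarith : (0:ℝ) < 2*D)] at h1
        rw [le_div_iff₀ (by linarith : (0:ℝ) < 2*D)]
        linarith
      have hsup : ‖v.2 - w.2‖ ≤ 1 / (2*D) := by
        rw [pi_norm_le_iff_of_nonneg (by positivity)]
        intro j
        simpa [Real.norm_eq_abs] using hcoord j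
      calc Nn (v.2 - w.2) ≤ D * ‖v.2 - w.2‖ := hDu _
      _ ≤ D * (1/(2*D)) := mul_le_mul_of_nonneg_left hsup (le_of_lt hD0)
      _ = 1/2 := by field_simp
      _ < 1 := by norm_num
    obtain ⟨av, hav⟩ : ∃ a, v = e (Stmt1Aux.imap m n a) := by
      obtain ⟨z, hz, hze⟩ := (hF hvF).1
      obtain ⟨a, rfl⟩ := Stmt1Aux.mem_ZPoints_iff.mp hz
      exact ⟨a, hze.symm⟩
    obtain ⟨aw, haw⟩ : ∃ a, w = e (Stmt1Aux.imap m n a) := by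
      obtain ⟨z, hz, hze⟩ := (hF hwF).1
      obtain ⟨a, rfl⟩ := Stmt1Aux.mem_ZPoints_iff.mp hz
      exact ⟨a, hze.symm⟩
    set a := av - aw with ha
    have hvw_eq : v - w = e (Stmt1Aux.imap m n a) := by
      rw [hav, haw, ← map_sub, ← Stmt1Aux.imap_sub]
    have ha0 : a ≠ 0 := by
      intro h
      apply hvw
      have h1 : v - w = 0 := by
        rw [hvw_eq, h, Stmt1Aux.imap_eq_zero.mpr rfl, map_zero]
      exact sub_eq_zero.mp h1
    obtain ⟨u', hprim, hb1, hb2⟩ :=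
      Stmt1Aux.exists_prim Nm Nn hNm hNn e (Stmt1Aux.mu a) a le_rfl ha0
    have he1 : (e (Stmt1Aux.imap m n a)).1 = v.1 - w.1 := by rw [← hvw_eq]; rfl
    have he2 : (e (Stmt1Aux.imap m n a)).2 = v.2 - w.2 := by rw [← hvw_eq]; rfl
    rw [he1] at hb1
    rw [he2] at hb2
    obtain ⟨_, hv₁1, _, _, hv₁eq⟩ := hF hv₁F
    have hlt : Nn u'.2 < 1 := lt_of_le_of_lt hb2 hu2
    have hmem : u' ∈ ({w | IsPrim (⇑e '' ZPoints m n) w} ∩ box Nm Nn v₁) :=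
      ⟨hprim, le_trans hb1 hu1, le_trans (le_of_lt hlt) hv₁1⟩
    rw [hv₁eq] at hmem
    rcases hmem with rfl | hmem
    · linarith
    · rw [Set.mem_singleton_iff] at hmem
      rw [hmem] at hlt
      have hns : Nn ((-v₁).2) = Nn v₁.2 := by
        have h := hNn.2.2.1 (-1) v₁.2
        simp only [neg_smul, one_smul, abs_neg, abs_one, one_mul] at h
        simpa using h
      rw [hns] at hlt
      linarith
  have hfin : (goodSet Nm Nn (⇑e '' ZPoints m n)).Finite := by
    by_contra hinf
    obtain ⟨t, ht, htc⟩ :=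
      (Set.Infinite.exists_subset_card_eq hinf) (T.card + 1)
    have := key t ht
    omega
  refine ⟨hfin, ?_⟩
  have h1 := key hfin.toFinset (by simp)
  rw [Set.ncard_eq_toFinset_card _ hfin]; exact h1
end

section
/- There exists a constant $C > 0$ such that for all sufficiently small $\varepsilon > 0$ and all $g \in \mathrm{SL}_{m+n}(\mathbb{R})$ in the $\varepsilon$-ball around the identity, and all unimodular lattices $\Lambda$: $|f(g\Lambda) - f(\Lambda)| \leq \sum_{v \in \Lambda_{\mathrm{prim}}} \varphi_{C\varepsilon}(v) + \sum_{v,w \in \Lambda_{\mathrm{prim}},\, w \neq \pm v} \Phi_{C\varepsilon}(v,w)$. -/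
/-- Membership in the boundary shell supporting `φ_ε`. -/
def inShell {m n : ℕ} (Nm : (Fin m → ℝ) → ℝ) (Nn : (Fin n → ℝ) → ℝ) (ε : ℝ)
    (v : Vec m n) : Prop :=
  (Nm v.1 ≤ 1 + ε ∧ 1 - ε ≤ Nn v.2 ∧ Nn v.2 ≤ Real.exp 1 + ε) ∧
    ¬(Nm v.1 < 1 - ε ∧ 1 + ε < Nn v.2 ∧ Nn v.2 < Real.exp 1 - ε)

/-- The condition supporting `Φ_ε`: both vectors lie in the enlarged box and one of the
two coordinate norms nearly coincide. -/
def phiCond {m n : ℕ} (Nm : (Fin m → ℝ) → ℝ) (Nn : (Fin n → ℝ) → ℝ) (ε : ℝ)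
    (v w : Vec m n) : Prop :=
  (Nm v.1 ≤ 1 + ε ∧ Nn v.2 ≤ Real.exp 1 + ε) ∧
    (Nm w.1 ≤ 1 + ε ∧ Nn w.2 ≤ Real.exp 1 + ε) ∧
    (|Nm v.1 - Nm w.1| ≤ ε ∨ |Nn v.2 - Nn w.2| ≤ ε)

section Lemma43Aux

/-- Type synonym used to put a new norm on a vector space. -/
def NSyn (E : Type*) : Type _ := E

theorem normlike_lower {E : Type*} [NormedAddCommGroup E] [NormedSpace ℝ E]
    [FiniteDimensional ℝ E] (N : E → ℝ)
    (h0 : ∀ x, 0 ≤ N x)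
    (heq : ∀ x, N x = 0 ↔ x = 0)
    (hsmul : ∀ (c : ℝ) x, N (c • x) = |c| * N x)
    (hadd : ∀ x y, N (x + y) ≤ N x + N y) :
    ∃ c > (0 : ℝ), ∀ x, c * ‖x‖ ≤ N x := by
  letI iA : AddCommGroup (NSyn E) := inferInstanceAs (AddCommGroup E)
  letI iM : Module ℝ (NSyn E) := inferInstanceAs (Module ℝ E)
  letI iN : NormedAddCommGroup (NSyn E) := AddGroupNorm.toNormedAddCommGroup
    { toFun := fun x => N x
      map_zero' := (heq 0).mpr rfl
      add_le' := hadd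
      neg' := fun (x : E) => by
        have h := hsmul (-1) x
        rw [neg_one_smul, abs_neg, abs_one, one_mul] at h
        exact h
      eq_zero_of_map_eq_zero' := fun x hx => (heq x).mp hx }
  letI iNS : NormedSpace ℝ (NSyn E) := ⟨fun a (x : E) => le_of_eq (by
      show N (a • x) = ‖a‖ * N x
      rw [hsmul, Real.norm_eq_abs])⟩
  letI iFD : FiniteDimensional ℝ (NSyn E) := inferInstanceAs (FiniteDimensional ℝ E)
  let f : NSyn E →ₗ[ℝ] E :=
    { toFun := fun x => x, map_add' := fun _ _ => rfl, map_smul' := fun _ _ => rfl }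
  let F := LinearMap.toContinuousLinearMap f
  refine ⟨(‖F‖ + 1)⁻¹, by positivity, fun x => ?_⟩
  have h2 : ‖x‖ ≤ ‖F‖ * N x := F.le_opNorm x
  have hF : (0:ℝ) ≤ ‖F‖ := norm_nonneg F
  rw [inv_mul_le_iff₀ (by positivity)]
  nlinarith [h0 x]

theorem zpoints_bounded_finite (m n : ℕ) (R : ℝ) :
    {z : Vec m n | z ∈ ZPoints m n ∧ ‖z‖ ≤ R}.Finite := by
  classical
  set T : (Fin m → ℤ) × (Fin n → ℤ) → Vec m n :=
    fun pq => ((fun i => (pq.1 i : ℝ)), (fun j => (pq.2 j : ℝ))) with hT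
  set B : Set ((Fin m → ℤ) × (Fin n → ℤ)) :=
    {pq | (∀ i, pq.1 i ∈ Set.Icc (-⌈R⌉) ⌈R⌉) ∧ (∀ j, pq.2 j ∈ Set.Icc (-⌈R⌉) ⌈R⌉)} with hB
  have hBfin : B.Finite := by
    have h1 : {p : Fin m → ℤ | ∀ i, p i ∈ Set.Icc (-⌈R⌉) ⌈R⌉}.Finite := by
      have := Set.Finite.pi (fun _ : Fin m => Set.finite_Icc (-⌈R⌉) ⌈R⌉)
      refine this.subset ?_
      intro p hp
      simp only [Set.mem_pi, Set.mem_univ, forall_true_left]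
      exact hp
    have h2 : {q : Fin n → ℤ | ∀ j, q j ∈ Set.Icc (-⌈R⌉) ⌈R⌉}.Finite := by
      have := Set.Finite.pi (fun _ : Fin n => Set.finite_Icc (-⌈R⌉) ⌈R⌉)
      refine this.subset ?_
      intro p hp
      simp only [Set.mem_pi, Set.mem_univ, forall_true_left]
      exact hp
    have : B ⊆ {p : Fin m → ℤ | ∀ i, p i ∈ Set.Icc (-⌈R⌉) ⌈R⌉} ×ˢ
        {q : Fin n → ℤ | ∀ j, q j ∈ Set.Icc (-⌈R⌉) ⌈R⌉} := by
      rintro ⟨p, q⟩ ⟨hp, hq⟩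
      exact ⟨hp, hq⟩
    exact (h1.prod h2).subset this
  refine (hBfin.image T).subset ?_
  rintro z ⟨⟨h1, h2⟩, hz⟩
  choose p hp using h1
  choose q hq using h2
  have hbound : ∀ (x : ℝ) (k : ℤ), x = (k : ℝ) → |x| ≤ R → k ∈ Set.Icc (-⌈R⌉) ⌈R⌉ := by
    intro x k hxk hx
    have h1 : |(k : ℝ)| ≤ (⌈R⌉ : ℝ) := by
      rw [← hxk]
      exact hx.trans (Int.le_ceil R)
    have h2 : |k| ≤ ⌈R⌉ := by exact_mod_cast h1
    rw [abs_le] at h2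
    exact Set.mem_Icc.mpr h2
  refine ⟨(p, q), ⟨?_, ?_⟩, ?_⟩
  · intro i
    refine hbound _ _ (hp i) ?_
    calc |z.1 i| = ‖z.1 i‖ := (Real.norm_eq_abs _).symm
      _ ≤ ‖z.1‖ := norm_le_pi_norm z.1 i
      _ ≤ ‖z‖ := norm_fst_le z
      _ ≤ R := hz
  · intro j
    refine hbound _ _ (hq j) ?_
    calc |z.2 j| = ‖z.2 j‖ := (Real.norm_eq_abs _).symm
      _ ≤ ‖z.2‖ := norm_le_pi_norm z.2 j
      _ ≤ ‖z‖ := norm_snd_le z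
      _ ≤ R := hz
  · exact Prod.ext (funext fun i => (hp i).symm) (funext fun j => (hq j).symm)

theorem lattice_bounded_finite (m n : ℕ) (Nm : (Fin m → ℝ) → ℝ) (Nn : (Fin n → ℝ) → ℝ)
    (hNm : IsNorm Nm) (hNn : IsNorm Nn) (e : Vec m n ≃ₗ[ℝ] Vec m n) (R : ℝ) :
    {v : Vec m n | v ∈ ⇑e '' ZPoints m n ∧ Nm v.1 ≤ R ∧ Nn v.2 ≤ R}.Finite := by
  obtain ⟨hm0, hmeq, hmsmul, hmadd⟩ := hNm
  obtain ⟨hn0, hneq, hnsmul, hnadd⟩ := hNn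
  set Q : Vec m n → ℝ := fun z => max (Nm (e z).1) (Nn (e z).2) with hQ
  have hq0 : ∀ z, 0 ≤ Q z := fun z => le_max_of_le_left (hm0 _)
  have hqeq : ∀ z, Q z = 0 ↔ z = 0 := by
    intro z
    constructor
    · intro h
      have h1 : Nm (e z).1 ≤ 0 := le_of_le_of_eq (le_max_left _ _) h
      have h2 : Nn (e z).2 ≤ 0 := le_of_le_of_eq (le_max_right _ _) h
      have e1 : (e z).1 = 0 := (hmeq _).mp (le_antisymm h1 (hm0 _))
      have e2 : (e z).2 = 0 := (hneq _).mp (le_antisymm h2 (hn0 _))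
      have h3 : e z = 0 := Prod.ext e1 e2
      simpa using (map_eq_zero_iff e e.injective).mp h3
    · rintro rfl
      simp [hQ, (hmeq 0).mpr rfl, (hneq 0).mpr rfl]
  have hqsmul : ∀ (c : ℝ) z, Q (c • z) = |c| * Q z := by
    intro c z
    have h1 : (e (c • z)).1 = c • (e z).1 := by rw [map_smul]; rfl
    have h2 : (e (c • z)).2 = c • (e z).2 := by rw [map_smul]; rfl
    simp only [hQ, h1, h2, hmsmul, hnsmul]
    exact (mul_max_of_nonneg _ _ (abs_nonneg c)).symm
  have hqadd : ∀ z w, Q (z + w) ≤ Q z + Q w := by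
    intro z w
    have h1 : (e (z + w)).1 = (e z).1 + (e w).1 := by rw [map_add]; rfl
    have h2 : (e (z + w)).2 = (e z).2 + (e w).2 := by rw [map_add]; rfl
    simp only [hQ, h1, h2]
    refine max_le ?_ ?_
    · exact (hmadd _ _).trans (add_le_add (le_max_left _ _) (le_max_left _ _))
    · exact (hnadd _ _).trans (add_le_add (le_max_right _ _) (le_max_right _ _))
  obtain ⟨c, hc, hlow⟩ := normlike_lower Q hq0 hqeq hqsmul hqadd
  rcases le_or_gt 0 R with hR | hR
  · have hsub : {v : Vec m n | v ∈ ⇑e '' ZPoints m n ∧ Nm v.1 ≤ R ∧ Nn v.2 ≤ R} ⊆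
        ⇑e '' {z : Vec m n | z ∈ ZPoints m n ∧ ‖z‖ ≤ R / c} := by
      rintro v ⟨⟨z, hz, rfl⟩, h1, h2⟩
      refine ⟨z, ⟨hz, ?_⟩, rfl⟩
      have hQz : Q z ≤ R := max_le h1 h2
      have := hlow z
      rw [le_div_iff₀ hc]
      linarith
    exact ((zpoints_bounded_finite m n (R / c)).image _).subset hsub
  · have hemp : {v : Vec m n | v ∈ ⇑e '' ZPoints m n ∧ Nm v.1 ≤ R ∧ Nn v.2 ≤ R} = ∅ := by
      ext v
      simp only [Set.mem_setOf_eq, Set.mem_empty_iff_false, iff_false]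
      rintro ⟨-, h1, -⟩
      exact absurd (lt_of_le_of_lt h1 hR) (not_lt.mpr (hm0 _))
    rw [hemp]
    exact Set.finite_empty

theorem isPrim_image_iff {m n : ℕ} (g : Vec m n ≃ₗ[ℝ] Vec m n) (Λ : Set (Vec m n))
    (v : Vec m n) : IsPrim (⇑g '' Λ) (g v) ↔ IsPrim Λ v := by
  unfold IsPrim
  refine and_congr (g.injective.mem_set_image) (and_congr ?_ (not_congr ?_))
  · exact not_congr (map_eq_zero_iff g g.injective)
  · constructor
    · rintro ⟨w', hw', k, hk, hkv⟩
      obtain ⟨w, hw, rfl⟩ := hw'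
      refine ⟨w, hw, k, hk, ?_⟩
      apply g.injective
      rw [map_zsmul]
      exact hkv
    · rintro ⟨w, hw, k, hk, rfl⟩
      exact ⟨g w, Set.mem_image_of_mem _ hw, k, hk, map_zsmul g k w⟩

end Lemma43Aux


/-- Lemma 4.3 (perturbed difference): there exists `C > 0` such that for all small
`ε > 0`, any determinant-one `g` in the `ε`-ball around the identity (i.e. moving every
vector by at most `ε` times its norm) and any unimodular lattice `Λ`,
`|f(gΛ) − f(Λ)| ≤ ∑_{v ∈ Λ_prim} φ_{Cε}(v) + ∑_{v ≠ ±w ∈ Λ_prim} Φ_{Cε}(v,w)`. -/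
theorem stmt_9 (m n : ℕ) (hm : 0 < m) (hn : 0 < n)
    (Nm : (Fin m → ℝ) → ℝ) (Nn : (Fin n → ℝ) → ℝ)
    (hNm : IsNorm Nm) (hNn : IsNorm Nn) :
    ∃ C > (0 : ℝ), ∃ ε₀ > (0 : ℝ), ∀ ε : ℝ, 0 < ε → ε ≤ ε₀ →
      ∀ g : Vec m n ≃ₗ[ℝ] Vec m n,
        LinearMap.det (g : Vec m n →ₗ[ℝ] Vec m n) = 1 →
        (∀ v : Vec m n,
          max (Nm ((g v - v).1)) (Nn ((g v - v).2)) ≤ ε * max (Nm v.1) (Nn v.2)) →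
        ∀ e : Vec m n ≃ₗ[ℝ] Vec m n,
          |LinearMap.det (e : Vec m n →ₗ[ℝ] Vec m n)| = 1 →
          ∀ Λ : Set (Vec m n), Λ = ⇑e '' ZPoints m n →
            ((fCount Nm Nn (⇑g '' Λ) : ℤ) - (fCount Nm Nn Λ : ℤ)).natAbs ≤
              {v | IsPrim Λ v ∧ inShell Nm Nn (C * ε) v}.ncard +
                {p : Vec m n × Vec m n | IsPrim Λ p.1 ∧ IsPrim Λ p.2 ∧
                  p.2 ≠ p.1 ∧ p.2 ≠ -p.1 ∧ phiCond Nm Nn (C * ε) p.1 p.2}.ncard := by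
  
  classical
  obtain ⟨hm0, hmeq, hmsmul, hmadd⟩ := id hNm
  obtain ⟨hn0, hneq, hnsmul, hnadd⟩ := id hNn
  have hmneg : ∀ x, Nm (-x) = Nm x := fun x => by
    simpa [neg_one_smul] using hmsmul (-1) x
  have hnneg : ∀ x, Nn (-x) = Nn x := fun x => by
    simpa [neg_one_smul] using hnsmul (-1) x
  have hmsub : ∀ a b, |Nm a - Nm b| ≤ Nm (a - b) := by
    intro a b
    have e1 : a = (a - b) + b := by abel
    have e2 : b = -(a - b) + a := by abel
    have h1 : Nm a ≤ Nm (a - b) + Nm b := by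
      nth_rewrite 1 [e1]; exact hmadd _ _
    have h2 : Nm b ≤ Nm (a - b) + Nm a := by
      nth_rewrite 1 [e2]
      calc Nm (-(a - b) + a) ≤ Nm (-(a - b)) + Nm a := hmadd _ _
        _ = Nm (a - b) + Nm a := by rw [hmneg]
    rw [abs_sub_le_iff]
    exact ⟨by linarith, by linarith⟩
  have hnsub : ∀ a b, |Nn a - Nn b| ≤ Nn (a - b) := by
    intro a b
    have e1 : a = (a - b) + b := by abel
    have e2 : b = -(a - b) + a := by abel
    have h1 : Nn a ≤ Nn (a - b) + Nn b := by
      nth_rewrite 1 [e1]; exact hnadd _ _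
    have h2 : Nn b ≤ Nn (a - b) + Nn a := by
      nth_rewrite 1 [e2]
      calc Nn (-(a - b) + a) ≤ Nn (-(a - b)) + Nn a := hnadd _ _
        _ = Nn (a - b) + Nn a := by rw [hnneg]
    rw [abs_sub_le_iff]
    exact ⟨by linarith, by linarith⟩
  refine ⟨100, by norm_num, 1/200, by norm_num, ?_⟩
  intro ε hε hε200 g _hdet hpert e _hdete Λ hΛ
  have hεnn : (0:ℝ) ≤ ε := hε.le
  have hexp3 : Real.exp 1 < 3 := lt_trans Real.exp_one_lt_d9 (by norm_num)
  have hexp1 : (1:ℝ) < Real.exp 1 := lt_trans (by norm_num) Real.exp_one_gt_d9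
  -- perturbation estimates
  have hpm : ∀ v : Vec m n, |Nm (g v).1 - Nm v.1| ≤ ε * max (Nm v.1) (Nn v.2) := by
    intro v
    have h := hpert v
    have h1 : Nm ((g v - v).1) ≤ ε * max (Nm v.1) (Nn v.2) := le_trans (le_max_left _ _) h
    have h2 : (g v - v).1 = (g v).1 - v.1 := rfl
    rw [h2] at h1
    exact (hmsub _ _).trans h1
  have hpn : ∀ v : Vec m n, |Nn (g v).2 - Nn v.2| ≤ ε * max (Nm v.1) (Nn v.2) := by
    intro v
    have h := hpert v
    have h1 : Nn ((g v - v).2) ≤ ε * max (Nm v.1) (Nn v.2) := le_trans (le_max_right _ _) h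
    have h2 : (g v - v).2 = (g v).2 - v.2 := rfl
    rw [h2] at h1
    exact (hnsub _ _).trans h1
  have hMnn : ∀ v : Vec m n, 0 ≤ max (Nm v.1) (Nn v.2) :=
    fun v => le_max_of_le_left (hm0 _)
  have hMle : ∀ v : Vec m n,
      max (Nm v.1) (Nn v.2) ≤ max (Nm (g v).1) (Nn (g v).2) + ε * max (Nm v.1) (Nn v.2) := by
    intro v
    have h1 := abs_le.mp (hpm v)
    have h2 := abs_le.mp (hpn v)
    refine max_le ?_ ?_
    · have h3 : Nm (g v).1 ≤ max (Nm (g v).1) (Nn (g v).2) := le_max_left _ _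
      linarith
    · have h3 : Nn (g v).2 ≤ max (Nm (g v).1) (Nn (g v).2) := le_max_right _ _
      linarith
  have hM6 : ∀ v : Vec m n, max (Nm (g v).1) (Nn (g v).2) ≤ 3 →
      max (Nm v.1) (Nn v.2) ≤ 6 := by
    intro v h
    have h1 := hMle v
    have h2 : ε * max (Nm v.1) (Nn v.2) ≤ (1/200) * max (Nm v.1) (Nn v.2) :=
      mul_le_mul_of_nonneg_right hε200 (hMnn v)
    linarith
  have key : ∀ v : Vec m n, max (Nm v.1) (Nn v.2) ≤ 6 →
      |Nm (g v).1 - Nm v.1| ≤ 6*ε ∧ |Nn (g v).2 - Nn v.2| ≤ 6*ε := by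
    intro v h
    constructor
    · exact (hpm v).trans (by nlinarith)
    · exact (hpn v).trans (by nlinarith)
  -- lattice facts
  have hneg : ∀ v ∈ Λ, -v ∈ Λ := by
    rw [hΛ]
    rintro v ⟨z, ⟨hz1, hz2⟩, rfl⟩
    refine ⟨-z, ⟨?_, ?_⟩, map_neg e z⟩
    · intro i
      obtain ⟨k, hk⟩ := hz1 i
      refine ⟨-k, ?_⟩
      show -(z.1 i) = ((-k : ℤ) : ℝ)
      rw [hk]; push_cast; ring
    · intro j
      obtain ⟨k, hk⟩ := hz2 j
      refine ⟨-k, ?_⟩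
      show -(z.2 j) = ((-k : ℤ) : ℝ)
      rw [hk]; push_cast; ring
  have hnegg : ∀ u ∈ ⇑g '' Λ, -u ∈ ⇑g '' Λ := by
    rintro u ⟨w, hw, rfl⟩
    exact ⟨-w, hneg w hw, map_neg g w⟩
  have hprimneg : ∀ (Λ' : Set (Vec m n)), (∀ u ∈ Λ', -u ∈ Λ') →
      ∀ u, IsPrim Λ' u → IsPrim Λ' (-u) := by
    rintro Λ' hcl u ⟨hu1, hu2, hu3⟩
    refine ⟨hcl u hu1, neg_ne_zero.mpr hu2, ?_⟩
    rintro ⟨w, hw, k, hk, hku⟩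
    exact hu3 ⟨-w, hcl w hw, k, hk, by rw [smul_neg, ← hku, neg_neg]⟩
  have memBox : ∀ u w : Vec m n, u ∈ box Nm Nn w ↔ (Nm u.1 ≤ Nm w.1 ∧ Nn u.2 ≤ Nn w.2) :=
    fun _ _ => Iff.rfl
  have memGood : ∀ (Λ' : Set (Vec m n)) (u : Vec m n), u ∈ goodSet Nm Nn Λ' ↔
      (u ∈ Λ' ∧ 1 ≤ Nn u.2 ∧ Nn u.2 < Real.exp 1 ∧ Nm u.1 ≤ 1 ∧
        {w | IsPrim Λ' w} ∩ box Nm Nn u = {u, -u}) := fun _ _ => Iff.rfl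
  have hboxself : ∀ v : Vec m n, v ∈ box Nm Nn v := fun v => ⟨le_refl _, le_refl _⟩
  have hboxneg : ∀ v : Vec m n, -v ∈ box Nm Nn v :=
    fun v => ⟨le_of_eq (hmneg _), le_of_eq (hnneg _)⟩
  have huniq : ∀ (Λ' : Set (Vec m n)) (v : Vec m n),
      {w | IsPrim Λ' w} ∩ box Nm Nn v = {v, -v} →
      ∀ w, IsPrim Λ' w → w ∈ box Nm Nn v → w = v ∨ w = -v := by
    intro Λ' v h w hw hb
    have hmem0 : w ∈ {w | IsPrim Λ' w} ∩ box Nm Nn v := ⟨hw, hb⟩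
    rw [h] at hmem0
    simpa using hmem0
  have hfail : ∀ (Λ' : Set (Vec m n)), (∀ u ∈ Λ', -u ∈ Λ') → ∀ v, IsPrim Λ' v →
      {w | IsPrim Λ' w} ∩ box Nm Nn v ≠ {v, -v} →
      ∃ w, IsPrim Λ' w ∧ w ∈ box Nm Nn v ∧ w ≠ v ∧ w ≠ -v := by
    intro Λ' hcl v hv hne
    by_contra hcon
    push_neg at hcon
    apply hne
    apply Set.Subset.antisymm
    · rintro w ⟨hw1, hw2⟩
      rcases eq_or_ne w v with rfl | h1
      · exact Set.mem_insert _ _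
      · exact Set.mem_insert_iff.mpr (Or.inr (hcon w hw1 hw2 h1))
    · rintro w hw
      rcases Set.mem_insert_iff.mp hw with rfl | hw'
      · exact ⟨hv, hboxself w⟩
      · rw [Set.mem_singleton_iff.mp hw']
        exact ⟨hprimneg Λ' hcl v hv, hboxneg v⟩
  -- sets
  set GΛ : Set (Vec m n) := ⇑g '' Λ with hGΛ
  set A : Set (Vec m n) := ⇑g ⁻¹' (goodSet Nm Nn GΛ) with hA
  set B : Set (Vec m n) := goodSet Nm Nn Λ with hB
  set K : Set (Vec m n) := {v | v ∈ Λ ∧ Nm v.1 ≤ 10 ∧ Nn v.2 ≤ 10} with hK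
  set S1 : Set (Vec m n) := {v | IsPrim Λ v ∧ inShell Nm Nn (100 * ε) v} with hS1
  set S2 : Set (Vec m n × Vec m n) := {p : Vec m n × Vec m n | IsPrim Λ p.1 ∧ IsPrim Λ p.2 ∧
      p.2 ≠ p.1 ∧ p.2 ≠ -p.1 ∧ phiCond Nm Nn (100 * ε) p.1 p.2} with hS2
  have hKfin : K.Finite := by
    rw [hK, hΛ]
    exact lattice_bounded_finite m n Nm Nn hNm hNn e 10
  have memK : ∀ u : Vec m n, u ∈ Λ → Nm u.1 ≤ 10 → Nn u.2 ≤ 10 → u ∈ K := by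
    intro u h1 h2 h3; rw [hK]; exact ⟨h1, h2, h3⟩
  have memA : ∀ u : Vec m n, u ∈ A ↔ g u ∈ goodSet Nm Nn GΛ := by
    intro u; rw [hA]; exact Iff.rfl
  have memB : ∀ u : Vec m n, u ∈ B ↔ u ∈ goodSet Nm Nn Λ := by
    intro u; rw [hB]
  have memS1 : ∀ u : Vec m n, IsPrim Λ u →
      Nm u.1 ≤ 1 + 100*ε → 1 - 100*ε ≤ Nn u.2 → Nn u.2 ≤ Real.exp 1 + 100*ε →
      ¬(Nm u.1 < 1 - 100*ε ∧ 1 + 100*ε < Nn u.2 ∧ Nn u.2 < Real.exp 1 - 100*ε) →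
      u ∈ S1 := by
    intro u h1 h2 h3 h4 h5; rw [hS1]; exact ⟨h1, ⟨h2, h3, h4⟩, h5⟩
  have memS2 : ∀ u w : Vec m n, IsPrim Λ u → IsPrim Λ w → w ≠ u → w ≠ -u →
      Nm u.1 ≤ 1 + 100*ε → Nn u.2 ≤ Real.exp 1 + 100*ε →
      Nm w.1 ≤ 1 + 100*ε → Nn w.2 ≤ Real.exp 1 + 100*ε →
      (|Nm u.1 - Nm w.1| ≤ 100*ε ∨ |Nn u.2 - Nn w.2| ≤ 100*ε) → (u, w) ∈ S2 := by
    intro u w h1 h2 h3 h4 h5 h6 h7 h8 h9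
    rw [hS2]
    exact ⟨h1, h2, h3, h4, ⟨h5, h6⟩, ⟨h7, h8⟩, h9⟩
  have hAsub : A ⊆ K := by
    intro v hv
    obtain ⟨hg0, hg1, hg2, hg3, hg4⟩ := (memGood GΛ (g v)).mp ((memA v).mp hv)
    have hvΛ : v ∈ Λ := (g.injective.mem_set_image).mp hg0
    have hMgv : max (Nm (g v).1) (Nn (g v).2) ≤ 3 :=
      max_le (hg3.trans (by norm_num)) (hg2.le.trans hexp3.le)
    have hMv : max (Nm v.1) (Nn v.2) ≤ 6 := hM6 v hMgv
    exact memK v hvΛ ((le_max_left _ _).trans (hMv.trans (by norm_num)))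
      ((le_max_right _ _).trans (hMv.trans (by norm_num)))
  have hBsub : B ⊆ K := by
    intro v hv
    obtain ⟨hvΛ, hb1, hb2, hb3, hb4⟩ := (memGood Λ v).mp ((memB v).mp hv)
    exact memK v hvΛ (by linarith) (by linarith)
  have hS1sub : S1 ⊆ K := by
    intro v hv
    rw [hS1] at hv
    have hvprim : IsPrim Λ v := hv.1
    have hs1 : Nm v.1 ≤ 1 + 100*ε := hv.2.1.1
    have hs3 : Nn v.2 ≤ Real.exp 1 + 100*ε := hv.2.1.2.2
    exact memK v hvprim.1 (by linarith) (by linarith)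
  have hS2sub : S2 ⊆ K ×ˢ K := by
    intro p hp
    rw [hS2] at hp
    have hp1 : IsPrim Λ p.1 := hp.1
    have hp2 : IsPrim Λ p.2 := hp.2.1
    have hphi := hp.2.2.2.2
    have hq1 : Nm p.1.1 ≤ 1 + 100*ε := hphi.1.1
    have hq2 : Nn p.1.2 ≤ Real.exp 1 + 100*ε := hphi.1.2
    have hq3 : Nm p.2.1 ≤ 1 + 100*ε := hphi.2.1.1
    have hq4 : Nn p.2.2 ≤ Real.exp 1 + 100*ε := hphi.2.1.2
    exact Set.mem_prod.mpr ⟨memK p.1 hp1.1 (by linarith) (by linarith),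
      memK p.2 hp2.1 (by linarith) (by linarith)⟩
  have hfA : A.Finite := hKfin.subset hAsub
  have hfB : B.Finite := hKfin.subset hBsub
  have hS1fin : S1.Finite := hKfin.subset hS1sub
  have hS2fin : S2.Finite := (hKfin.prod hKfin).subset hS2sub
  -- the main claim
  have hmain : ∀ v ∈ (A \ B) ∪ (B \ A), v ∈ S1 ∨ ∃ w, (v, w) ∈ S2 := by
    intro v hv
    rcases hv with ⟨hvA, hvB⟩ | ⟨hvB, hvA⟩
    · -- v ∈ A \ B
      obtain ⟨hg0, hg1, hg2, hg3, hg4⟩ := (memGood GΛ (g v)).mp ((memA v).mp hvA)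
      have hvΛ : v ∈ Λ := (g.injective.mem_set_image).mp hg0
      have hgvprim : IsPrim GΛ (g v) := by
        have hmem : g v ∈ ({g v, -(g v)} : Set (Vec m n)) := Set.mem_insert _ _
        rw [← hg4] at hmem
        exact hmem.1
      have hvprim : IsPrim Λ v := (isPrim_image_iff g Λ v).mp hgvprim
      have hMgv : max (Nm (g v).1) (Nn (g v).2) ≤ 3 :=
        max_le (hg3.trans (by norm_num)) (hg2.le.trans hexp3.le)
      have hMv : max (Nm v.1) (Nn v.2) ≤ 6 := hM6 v hMgv
      obtain ⟨hkm, hkn⟩ := key v hMv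
      have hkm' := abs_le.mp hkm
      have hkn' := abs_le.mp hkn
      by_cases hw1 : 1 ≤ Nn v.2
      · by_cases hw2 : Nn v.2 < Real.exp 1
        · by_cases hw3 : Nm v.1 ≤ 1
          · -- the box condition must fail
            have hne : {w | IsPrim Λ w} ∩ box Nm Nn v ≠ {v, -v} := by
              intro hcon
              exact hvB ((memB v).mpr ((memGood Λ v).mpr ⟨hvΛ, hw1, hw2, hw3, hcon⟩))
            obtain ⟨w, hwprim, hwbox, hwv, hwnv⟩ := hfail Λ hneg v hvprim hne
            have hwb1 : Nm w.1 ≤ Nm v.1 := ((memBox w v).mp hwbox).1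
            have hwb2 : Nn w.2 ≤ Nn v.2 := ((memBox w v).mp hwbox).2
            right
            have hgwprim : IsPrim GΛ (g w) := (isPrim_image_iff g Λ w).mpr hwprim
            have hgwbox : ¬(Nm (g w).1 ≤ Nm (g v).1 ∧ Nn (g w).2 ≤ Nn (g v).2) := by
              intro hb
              rcases huniq GΛ (g v) hg4 (g w) hgwprim ((memBox _ _).mpr hb) with h | h
              · exact hwv (g.injective h)
              · refine hwnv (g.injective ?_)
                rw [h, map_neg]
            have hMw : max (Nm w.1) (Nn w.2) ≤ 6 :=
              max_le (by linarith) (by linarith)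
            obtain ⟨hkm2, hkn2⟩ := key w hMw
            have hkm2' := abs_le.mp hkm2
            have hkn2' := abs_le.mp hkn2
            refine ⟨w, memS2 v w hvprim hwprim hwv hwnv ?_ ?_ ?_ ?_ ?_⟩
            · linarith
            · linarith
            · linarith
            · linarith
            · rcases not_and_or.mp hgwbox with h | h
              · left
                push_neg at h
                rw [abs_le]
                exact ⟨by linarith, by linarith⟩
              · right
                push_neg at h
                rw [abs_le]
                exact ⟨by linarith, by linarith⟩
          · -- Nm v.1 > 1 : shell
            left
            push_neg at hw3
            refine memS1 v hvprim ?_ ?_ ?_ ?_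
            · linarith
            · linarith
            · linarith
            · rintro ⟨i1, i2, i3⟩
              linarith
        · -- Nn v.2 ≥ e : shell
          left
          push_neg at hw2
          refine memS1 v hvprim ?_ ?_ ?_ ?_
          · linarith
          · linarith
          · linarith
          · rintro ⟨i1, i2, i3⟩
            linarith
      · -- Nn v.2 < 1 : shell
        left
        push_neg at hw1
        refine memS1 v hvprim ?_ ?_ ?_ ?_
        · linarith
        · linarith
        · linarith
        · rintro ⟨i1, i2, i3⟩
          linarith
    · -- v ∈ B \ A
      obtain ⟨hvΛ, hb1, hb2, hb3, hb4⟩ := (memGood Λ v).mp ((memB v).mp hvB)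
      have hvprim : IsPrim Λ v := by
        have hmem : v ∈ ({v, -v} : Set (Vec m n)) := Set.mem_insert _ _
        rw [← hb4] at hmem
        exact hmem.1
      have hgvprim : IsPrim GΛ (g v) := (isPrim_image_iff g Λ v).mpr hvprim
      have hMv : max (Nm v.1) (Nn v.2) ≤ 6 :=
        max_le (by linarith) (by linarith)
      obtain ⟨hkm, hkn⟩ := key v hMv
      have hkm' := abs_le.mp hkm
      have hkn' := abs_le.mp hkn
      have hgv0 : g v ∈ GΛ := Set.mem_image_of_mem _ hvΛ
      by_cases hw1 : 1 ≤ Nn (g v).2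
      · by_cases hw2 : Nn (g v).2 < Real.exp 1
        · by_cases hw3 : Nm (g v).1 ≤ 1
          · -- box condition for g v must fail
            have hne : {w | IsPrim GΛ w} ∩ box Nm Nn (g v) ≠ {g v, -(g v)} := by
              intro hcon
              exact hvA ((memA v).mpr ((memGood GΛ (g v)).mpr ⟨hgv0, hw1, hw2, hw3, hcon⟩))
            obtain ⟨u, huprim, hubox, huv, hunv⟩ := hfail GΛ hnegg (g v) hgvprim hne
            obtain ⟨w, hwΛ, rfl⟩ := huprim.1
            have hwprim : IsPrim Λ w := (isPrim_image_iff g Λ w).mp huprim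
            have hwv : w ≠ v := fun hh => huv (by rw [hh])
            have hwnv : w ≠ -v := fun hh => hunv (by rw [hh, map_neg])
            have hub1 : Nm (g w).1 ≤ Nm (g v).1 := ((memBox _ _).mp hubox).1
            have hub2 : Nn (g w).2 ≤ Nn (g v).2 := ((memBox _ _).mp hubox).2
            have hwnotbox : ¬(Nm w.1 ≤ Nm v.1 ∧ Nn w.2 ≤ Nn v.2) := by
              intro hb
              rcases huniq Λ v hb4 w hwprim ((memBox _ _).mpr hb) with h | h
              · exact hwv h
              · exact hwnv h
            have hMgw : max (Nm (g w).1) (Nn (g w).2) ≤ 3 :=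
              max_le (by linarith) (by linarith)
            have hMw : max (Nm w.1) (Nn w.2) ≤ 6 := hM6 w hMgw
            obtain ⟨hkm2, hkn2⟩ := key w hMw
            have hkm2' := abs_le.mp hkm2
            have hkn2' := abs_le.mp hkn2
            right
            refine ⟨w, memS2 v w hvprim hwprim hwv hwnv ?_ ?_ ?_ ?_ ?_⟩
            · linarith
            · linarith
            · linarith
            · linarith
            · rcases not_and_or.mp hwnotbox with h | h
              · left
                push_neg at h
                rw [abs_le]
                exact ⟨by linarith, by linarith⟩
              · right
                push_neg at h
                rw [abs_le]
                exact ⟨by linarith, by linarith⟩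
          · left
            push_neg at hw3
            refine memS1 v hvprim ?_ ?_ ?_ ?_
            · linarith
            · linarith
            · linarith
            · rintro ⟨i1, i2, i3⟩
              linarith
        · left
          push_neg at hw2
          refine memS1 v hvprim ?_ ?_ ?_ ?_
          · linarith
          · linarith
          · linarith
          · rintro ⟨i1, i2, i3⟩
            linarith
      · left
        push_neg at hw1
        refine memS1 v hvprim ?_ ?_ ?_ ?_
        · linarith
        · linarith
        · linarith
        · rintro ⟨i1, i2, i3⟩
          linarith
  -- counting
  have hcountA : fCount Nm Nn GΛ = A.ncard := by
    have himg : ⇑g '' A = goodSet Nm Nn GΛ := by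
      rw [hA]; exact Set.image_preimage_eq _ g.surjective
    have h0 : fCount Nm Nn GΛ = (goodSet Nm Nn GΛ).ncard := rfl
    rw [h0, ← himg, Set.ncard_image_of_injective _ g.injective]
  have hcountB : fCount Nm Nn Λ = B.ncard := by rw [hB]; rfl
  set D : Set (Vec m n) := (A \ B) ∪ (B \ A) with hD
  have hsplit : D.ncard ≤ S1.ncard + S2.ncard := by
    have h1 : D.ncard ≤ (D ∩ S1).ncard + (D \ S1).ncard := by
      calc D.ncard = ((D ∩ S1) ∪ (D \ S1)).ncard := by rw [Set.inter_union_diff]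
        _ ≤ (D ∩ S1).ncard + (D \ S1).ncard := Set.ncard_union_le _ _
    have h2 : (D ∩ S1).ncard ≤ S1.ncard :=
      Set.ncard_le_ncard Set.inter_subset_right hS1fin
    have h3 : (D \ S1).ncard ≤ S2.ncard := by
      have hsub : (D \ S1) ⊆ Prod.fst '' S2 := by
        rintro v ⟨hvD, hvS⟩
        rw [hD] at hvD
        obtain ⟨w, hw⟩ := (hmain v hvD).resolve_left hvS
        exact ⟨(v, w), hw, rfl⟩
      calc (D \ S1).ncard ≤ (Prod.fst '' S2).ncard :=
            Set.ncard_le_ncard hsub (hS2fin.image _)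
        _ ≤ S2.ncard := Set.ncard_image_le hS2fin
    omega
  have hAB : A.ncard ≤ B.ncard + (A \ B).ncard := by
    have hsub : A ⊆ B ∪ (A \ B) := by
      intro v hv
      by_cases h : v ∈ B
      · exact Set.mem_union_left _ h
      · exact Set.mem_union_right _ ⟨hv, h⟩
    calc A.ncard ≤ (B ∪ (A \ B)).ncard :=
          Set.ncard_le_ncard hsub (hfB.union hfA.diff)
      _ ≤ B.ncard + (A \ B).ncard := Set.ncard_union_le _ _
  have hBA : B.ncard ≤ A.ncard + (B \ A).ncard := by
    have hsub : B ⊆ A ∪ (B \ A) := by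
      intro v hv
      by_cases h : v ∈ A
      · exact Set.mem_union_left _ h
      · exact Set.mem_union_right _ ⟨hv, h⟩
    calc B.ncard ≤ (A ∪ (B \ A)).ncard :=
          Set.ncard_le_ncard hsub (hfA.union hfB.diff)
      _ ≤ A.ncard + (B \ A).ncard := Set.ncard_union_le _ _
  have hDeq : (A \ B).ncard + (B \ A).ncard = D.ncard := by
    rw [hD]
    exact (Set.ncard_union_eq disjoint_sdiff_sdiff hfA.diff hfB.diff).symm
  rw [hcountA, hcountB]
  omega
end
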